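/- arXiv:1910.11737 — 2 statements merged into one kernel-verified Lean document; each statement's English description precedes it below -/
import Mathlib

section
/- On the player set N = {0,1,...,m} (m ≥ 1), consider the game where v(S) = p if S contains {2,...,m} and at least one of {0,1} (players 0 and 1 are identical substitutes for task 1). Then the Shapley value of player 0 equals p/((m+1)m), the same holds for player 1, and the Shapley value of each player j ∈ {2,...,m} is p/m + p/((m+1)m). -/
/-- The Shapley value of player `i` in the cooperative game `(N, v)`. -/
noncomputable def shapley {α : Type*} [DecidableEq α] (N : Finset α) (v : Finset α → ℝ) (i : α) : ℝ :=
  ∑ S ∈ (N.erase i).powerset,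
    ((S.card.factorial * (N.card - S.card - 1).factorial : ℕ) : ℝ) / (N.card.factorial : ℝ) *
      (v (insert i S) - v S)

/-!
Only coalitions in which a player is pivotal contribute to its Shapley value. A substitute `a`
is pivotal only for the core `N \ {a, b}` of size `|N| - 2`, whose weight is `1/(|N|(|N|-1))`.
A core player `j` is pivotal exactly for `E ∪ X` with `E = N \ {a, b, j}` and `∅ ≠ X ⊆ {a, b}`:
two coalitions of size `|N| - 2` and one of size `|N| - 1`, of total weight
`2/(|N|(|N|-1)) + 1/|N| = 1/(|N|-1) + 1/(|N|(|N|-1))`.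
-/

open Finset

noncomputable def shapleyWeight (n k : ℕ) : ℝ :=
  ((k.factorial * (n - k - 1).factorial : ℕ) : ℝ) / n.factorial

lemma shapleyWeight_self_sub_two {n : ℕ} (hn : 2 ≤ n) :
    shapleyWeight n (n - 2) = 1 / (n * (n - 1)) := by
  obtain ⟨k, rfl⟩ := Nat.exists_eq_add_of_le' hn
  rw [shapleyWeight, show k + 2 - 2 = k by omega, show k + 2 - k - 1 = 1 by omega]
  push_cast [Nat.factorial_succ]
  rw [show (k : ℝ) + 2 - 1 = k + 1 by ring]
  field_simp
  ring

lemma shapleyWeight_self_sub_one {n : ℕ} (hn : 1 ≤ n) : shapleyWeight n (n - 1) = 1 / n := by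
  obtain ⟨k, rfl⟩ := Nat.exists_eq_add_of_le' hn
  rw [shapleyWeight, show k + 1 - 1 = k by omega, show k + 1 - k - 1 = 0 by omega]
  push_cast [Nat.factorial_succ, Nat.factorial_zero]
  field_simp

lemma two_mul_shapleyWeight_self_sub_two_add {n : ℕ} (hn : 2 ≤ n) :
    2 * shapleyWeight n (n - 2) + shapleyWeight n (n - 1) = 1 / (n - 1) + 1 / (n * (n - 1)) := by
  rw [shapleyWeight_self_sub_two hn, shapleyWeight_self_sub_one (by omega)]
  have hn₀ : (n : ℝ) ≠ 0 := by positivity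
  have hn₁ : (n : ℝ) - 1 ≠ 0 := by
    rw [sub_ne_zero]; exact_mod_cast (by omega : n ≠ 1)
  field_simp
  ring

section SubstitutesGame

variable {α : Type*} [DecidableEq α]

lemma shapley_eq_sum_shapleyWeight (N : Finset α) (v : Finset α → ℝ) (i : α) :
    shapley N v i = ∑ S ∈ (N.erase i).powerset, shapleyWeight #N #S * (v (insert i S) - v S) :=
  rfl

def substitutesGame (N : Finset α) (a b : α) (p : ℝ) (S : Finset α) : ℝ :=
  if (N.erase a).erase b ⊆ S ∧ (a ∈ S ∨ b ∈ S) then p else 0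

lemma substitutesGame_comm (N : Finset α) (a b : α) (p : ℝ) :
    substitutesGame N a b p = substitutesGame N b a p := by
  ext S
  simp only [substitutesGame, erase_right_comm, or_comm]

variable {N : Finset α} {a b : α} (p : ℝ)

lemma substitutesGame_insert_eq_of_ne_core {S : Finset α} (hS : S ⊆ N.erase a)
    (hne : S ≠ (N.erase a).erase b) :
    substitutesGame N a b p (insert a S) = substitutesGame N a b p S := by
  by_cases hcore : (N.erase a).erase b ⊆ S
  · obtain ⟨x, hxS, hxT⟩ := not_subset.1 fun h => hne (h.antisymm hcore)
    have hbS : b ∈ S := by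
      by_contra hbS
      exact hxT (mem_erase.2 ⟨fun hxb => hbS (hxb ▸ hxS), hS hxS⟩)
    simp [substitutesGame, hcore, hbS, hcore.trans (subset_insert a S)]
  · have haT : a ∉ (N.erase a).erase b := by simp
    simp [substitutesGame, hcore, subset_insert_iff_of_notMem haT]

lemma shapley_substitutesGame_left_eq (hab : a ≠ b) (ha : a ∈ N) (hb : b ∈ N) :
    shapley N (substitutesGame N a b p) a = p / (#N * (#N - 1)) := by
  set T := (N.erase a).erase b with hT
  have hTmem : T ∈ (N.erase a).powerset := mem_powerset.2 (erase_subset _ _)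
  rw [shapley_eq_sum_shapleyWeight, sum_eq_single_of_mem T hTmem fun S hS hne => by
    rw [substitutesGame_insert_eq_of_ne_core p (mem_powerset.1 hS) hne, sub_self, mul_zero]]
  have hcard : #T = #N - 2 := by
    rw [hT, card_erase_of_mem (mem_erase.2 ⟨hab.symm, hb⟩), card_erase_of_mem ha]; rfl
  have hN : 2 ≤ #N := by
    simpa [card_pair hab] using card_le_card (insert_subset ha (singleton_subset_iff.2 hb))
  have hpivot : substitutesGame N a b p (insert a T) = p := by simp [substitutesGame, T]
  have hcore : substitutesGame N a b p T = 0 := by simp [substitutesGame, T]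
  rw [hpivot, hcore, hcard, shapleyWeight_self_sub_two hN]
  ring

lemma substitutesGame_insert_sub_of_mem_core {j : α} (hj : j ∈ (N.erase a).erase b)
    {S : Finset α} (hjS : j ∉ S) :
    substitutesGame N a b p (insert j S) - substitutesGame N a b p S =
      if ((N.erase a).erase b).erase j ⊆ S ∧ (a ∈ S ∨ b ∈ S) then p else 0 := by
  have hjab : j ≠ a ∧ j ≠ b := by simp at hj; tauto
  have hcore : ¬ (N.erase a).erase b ⊆ S := fun h => hjS (h hj)
  simp [substitutesGame, hcore, ← subset_insert_iff, hjab.1.symm, hjab.2.symm]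

lemma shapley_substitutesGame_eq_of_ne {j : α} (hab : a ≠ b) (ha : a ∈ N) (hb : b ∈ N)
    (hj : j ∈ N) (hja : j ≠ a) (hjb : j ≠ b) :
    shapley N (substitutesGame N a b p) j = p / (#N - 1) + p / (#N * (#N - 1)) := by
  rw [shapley_eq_sum_shapleyWeight, sum_congr rfl fun S hS => by
    rw [substitutesGame_insert_sub_of_mem_core p (by simp [hja, hjb, hj])
      fun h => (mem_erase.1 (mem_powerset.1 hS h)).1 rfl]]
  set E := ((N.erase a).erase b).erase j
  have haE : a ∉ E := by simp [E]
  have hbE : b ∉ E := by simp [E]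
  have habE : a ∉ insert b E := by simp [hab, haE]
  have hsplit : N.erase j = insert a (insert b E) := by
    ext x; simp [E]; grind
  have hvanish : ∀ X ⊆ {a, b}, ∀ t ∈ E.powerset, t ≠ E →
      shapleyWeight #N #(X ∪ t) * (if E ⊆ X ∪ t ∧ (a ∈ X ∪ t ∨ b ∈ X ∪ t) then p else 0) = 0 := by
    intro X hX t ht hne
    have hdisj : Disjoint E X :=
      disjoint_of_subset_right hX (by simp [disjoint_insert_right, haE, hbE])
    suffices ¬ E ⊆ X ∪ t by simp [this]
    exact fun h => hne ((mem_powerset.1 ht).antisymm (hdisj.left_le_of_le_sup_left h))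
  -- Splitting off `a` and `b` writes each `S ⊆ N \ {j}` as `X ∪ t` with `X ⊆ {a, b}`, `t ⊆ E`.
  rw [hsplit, sum_powerset_insert habE, sum_powerset_insert hbE, sum_powerset_insert hbE,
    sum_eq_single_of_mem E (mem_powerset_self E) (by simpa using hvanish ∅ (empty_subset _)),
    sum_eq_single_of_mem E (mem_powerset_self E) (by simpa using hvanish {b} (by simp)),
    sum_eq_single_of_mem E (mem_powerset_self E) (by simpa using hvanish {a} (by simp)),
    sum_eq_single_of_mem E (mem_powerset_self E) (by simpa using hvanish {a, b} (by simp))]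
  have hcard : #E + 2 = #N - 1 := by
    rw [← card_erase_of_mem hj, hsplit, card_insert_of_notMem habE, card_insert_of_notMem hbE]
  have hEab : E ⊆ insert a (insert b E) := (subset_insert _ _).trans (subset_insert _ _)
  simp only [hEab, haE, hbE, habE, card_insert_of_notMem, not_false_eq_true, or_self, and_false,
    if_false, mul_zero, zero_add, subset_insert, mem_insert_self, true_or, or_true, and_self,
    if_true]
  rw [show #E + 1 + 1 = #N - 1 by omega, show #E + 1 = #N - 2 by omega]
  linear_combination p * two_mul_shapleyWeight_self_sub_two_add (n := #N) (by omega)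

end SubstitutesGame

/-- On players `{0,1,…,m}`, where a coalition is worth `p` iff it contains `{2,…,m}` and at
least one of the identical substitutes `0,1`: players `0` and `1` each get Shapley value
`p/((m+1)m)`, and every player `j ∈ {2,…,m}` gets `p/m + p/((m+1)m)`. -/
theorem shapley_two_identical_players (m : ℕ) (hm : 1 ≤ m) (p : ℝ) :
    let v : Finset (Fin (m + 1)) → ℝ :=
      fun S => if (Finset.univ.erase (0 : Fin (m + 1))).erase 1 ⊆ S ∧
                  ((0 : Fin (m + 1)) ∈ S ∨ (1 : Fin (m + 1)) ∈ S) then p else 0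
    shapley Finset.univ v 0 = p / ((m + 1) * m) ∧
    shapley Finset.univ v 1 = p / ((m + 1) * m) ∧
      ∀ j : Fin (m + 1), j ≠ 0 → j ≠ 1 →
        shapley Finset.univ v j = p / m + p / ((m + 1) * m) := by
  intro v
  have h01 : (0 : Fin (m + 1)) ≠ 1 := by
    rw [Ne, Fin.ext_iff, Fin.val_zero, Fin.val_one', Nat.mod_eq_of_lt (by omega)]
    omega
  have hv : v = substitutesGame univ 0 1 p := rfl
  have hcard : ((#(univ : Finset (Fin (m + 1))) : ℕ) : ℝ) - 1 = m := by simp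
  refine ⟨?_, ?_, fun j hj0 hj1 => ?_⟩
  · rw [hv, shapley_substitutesGame_left_eq p h01 (mem_univ _) (mem_univ _), hcard]
    simp
  · rw [hv, substitutesGame_comm,
      shapley_substitutesGame_left_eq p h01.symm (mem_univ _) (mem_univ _), hcard]
    simp
  · rw [hv, shapley_substitutesGame_eq_of_ne p h01 (mem_univ _) (mem_univ _) (mem_univ _) hj0 hj1,
      hcard]
    simp
end

section
/- For m ≥ 1, k ≥ 1, the quantity Σ_{i=1}^{k} (i-1)!(m-1)!/(m+i-1)! · p equals the Shapley value of each non-duplicated task-player in the game with k identical players for one task: in the game on players {1,...,m-1} ∪ {j^1,...,j^k} where v(S) = p iff {1,...,m-1} ⊆ S and S ∩ {j^1,...,j^k} ≠ ∅, the Shapley value of each player l ∈ {1,...,m-1} equals p · Σ_{i=1}^{k} (i-1)!(m-1)!/(m+i-1)!. -/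
open Finset Nat

theorem Finset.sum_powerset_disjSum {α β M : Type*} [AddCommMonoid M] (s : Finset α)
    (t : Finset β) (f : Finset (α ⊕ β) → M) :
    ∑ S ∈ (s.disjSum t).powerset, f S =
      ∑ A ∈ s.powerset, ∑ B ∈ t.powerset, f (A.disjSum B) := by
  rw [← sum_product']
  refine sum_nbij' (fun S => (S.toLeft, S.toRight)) (fun P => P.1.disjSum P.2) ?_ ?_ ?_ ?_ ?_ <;>
    simp [subset_disjSum, toLeft_disjSum_toRight]

theorem Nat.choose_mul_factorial_add_mul_factorial_sub {k n : ℕ} (q : ℕ) (h : n ≤ k) :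
    k.choose n * ((q + n)! * (k - n)!) = k ! * q ! * (n + q).choose q := by
  refine Nat.eq_of_mul_eq_mul_right (factorial_pos n) ?_
  calc k.choose n * ((q + n)! * (k - n)!) * n ! = k.choose n * n ! * (k - n)! * (n + q)! := by
        rw [add_comm q]; ring
    _ = k ! * ((n + q).choose q * n ! * q !) := by
        rw [choose_mul_factorial_mul_factorial h, add_choose_mul_factorial_mul_factorial]
    _ = k ! * q ! * (n + q).choose q * n ! := by ring

theorem Nat.succ_mul_sum_range_choose_mul_factorial_add_mul_factorial_sub (q k : ℕ) :
    (q + 1) * ∑ n ∈ range (k + 1), k.choose n * ((q + n)! * (k - n)!) = (q + 1 + k)! := by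
  rw [sum_congr rfl fun n hn =>
      choose_mul_factorial_add_mul_factorial_sub q (Nat.lt_succ_iff.1 (mem_range.1 hn)),
    ← mul_sum, sum_range_add_choose, show q + 1 + k = k + (q + 1) by ring,
    ← add_choose_mul_factorial_mul_factorial, ← add_assoc, factorial_succ]
  ring

theorem sum_powerset_factorial_add_card_mul_factorial_sub_card {β : Type*} (q : ℕ)
    (s : Finset β) :
    ∑ B ∈ s.powerset, (((q + #B)! * (#s - #B)! : ℕ) : ℝ) / (q + 1 + #s)! = 1 / (q + 1) := by
  rw [sum_powerset_apply_card (fun n => (((q + n)! * (#s - n)! : ℕ) : ℝ) / (q + 1 + #s)!)]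
  simp_rw [nsmul_eq_mul, ← mul_div_assoc, ← sum_div]
  rw [div_eq_div_iff (by positivity) (by positivity), one_mul, mul_comm]
  exact_mod_cast succ_mul_sum_range_choose_mul_factorial_add_mul_factorial_sub q #s

theorem sum_range_factorial_mul_factorial_div_factorial (q k : ℕ) :
    ∑ i ∈ range k, (i ! * (q + 1)! : ℝ) / (q + 2 + i)! =
      1 / (q + 1) - (k ! * q ! : ℝ) / (q + 1 + k)! := by
  have step (i : ℕ) : (i ! * (q + 1)! : ℝ) / (q + 2 + i)! =
      (i ! * q ! : ℝ) / (q + 1 + i)! - ((i + 1)! * q ! : ℝ) / (q + 1 + (i + 1))! := by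
    rw [show q + 1 + (i + 1) = q + 2 + i by ring, show q + 2 + i = (q + 1 + i) + 1 by ring]
    push_cast [factorial_succ]
    field_simp
    ring
  rw [sum_congr rfl fun i _ => step i, sum_range_sub', factorial_zero, add_zero, factorial_succ]
  push_cast
  field_simp

section DuplicateTaskGame

variable {α β : Type*} [Fintype α] [Fintype β] [DecidableEq α] [DecidableEq β]

def duplicateTaskGame (p : ℝ) (S : Finset (α ⊕ β)) : ℝ :=
  if (∀ a : α, Sum.inl a ∈ S) ∧ (∃ b : β, Sum.inr b ∈ S) then p else 0

theorem duplicateTaskGame_disjSum (p : ℝ) (A : Finset α) (B : Finset β) :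
    duplicateTaskGame p (A.disjSum B) = if A = univ ∧ B.Nonempty then p else 0 := by
  simp only [duplicateTaskGame, inl_mem_disjSum, inr_mem_disjSum, eq_univ_iff_forall,
    Finset.Nonempty]

theorem duplicateTaskGame_insert_inl_sub (p : ℝ) {l : α} {A : Finset α} (hl : l ∉ A)
    (B : Finset β) :
    duplicateTaskGame p (insert (Sum.inl l) (A.disjSum B)) - duplicateTaskGame p (A.disjSum B)
      = if A = univ.erase l ∧ B.Nonempty then p else 0 := by
  have hins : insert (Sum.inl l) (A.disjSum B) = (insert l A).disjSum B := by
    ext (a | b) <;> simp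
  rw [hins, duplicateTaskGame_disjSum, duplicateTaskGame_disjSum,
    if_neg fun (h : A = univ ∧ B.Nonempty) => hl (h.1 ▸ mem_univ l), sub_zero]
  simp only [eq_comm (a := A), erase_eq_iff_eq_insert (mem_univ l) hl, eq_comm (a := univ)]

theorem shapley_inl_duplicateTaskGame {q : ℕ} (hα : Fintype.card α = q + 1) (p : ℝ) (l : α) :
    shapley univ (duplicateTaskGame (β := β) p) (Sum.inl l) =
      p * (1 / (q + 1) - ((Fintype.card β)! * q ! : ℝ) / (q + 1 + Fintype.card β)!) := by
  generalize hk : Fintype.card β = k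
  have hl : l ∉ univ.erase l := notMem_erase l univ
  have hN : #(univ : Finset (α ⊕ β)) = q + 1 + k := by simp [hα, hk]
  have herase : (univ.erase (Sum.inl l) : Finset (α ⊕ β)) = (univ.erase l).disjSum univ := by
    ext (a | b) <;> simp
  have hweight (B : Finset β) :
      (((#((univ.erase l).disjSum B))! *
          (#(univ : Finset (α ⊕ β)) - #((univ.erase l).disjSum B) - 1)! : ℕ) : ℝ) /
        (#(univ : Finset (α ⊕ β)))! = ((q + #B)! * (k - #B)! : ℕ) / (q + 1 + k)! := by
    have : #B ≤ k := hk ▸ card_le_univ B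
    rw [card_disjSum, card_erase_of_mem (mem_univ l), Finset.card_univ, hα, hN,
      show q + 1 - 1 + #B = q + #B by omega, show q + 1 + k - (q + #B) - 1 = k - #B by omega]
  have htotal := sum_powerset_factorial_add_card_mul_factorial_sub_card q (univ : Finset β)
  rw [Finset.card_univ, hk] at htotal
  have hnonempty (B : Finset β) :
      (if B.Nonempty then p else 0) = p - if B = ∅ then p else 0 := by
    rcases B.eq_empty_or_nonempty with rfl | hB
    · simp
    · simp [hB, hB.ne_empty]
  rw [shapley, herase, sum_powerset_disjSum,
    sum_eq_single_of_mem _ (mem_powerset_self (univ.erase l))]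
  · simp_rw [hweight, duplicateTaskGame_insert_inl_sub p hl, true_and, hnonempty, mul_sub,
      mul_ite, mul_zero, sum_sub_distrib, sum_ite_eq', ← sum_mul, htotal]
    rw [if_pos (empty_mem_powerset _), card_empty, add_zero, Nat.sub_zero]
    push_cast
    ring
  · exact fun A hA hAE => sum_eq_zero fun B _ => by
      rw [duplicateTaskGame_insert_inl_sub p (fun h => hl (mem_powerset.1 hA h)),
        if_neg (hAE ∘ And.left), mul_zero]

end DuplicateTaskGame

theorem shapley_singleton_player_with_k_duplicates_general (m k : ℕ)
    (p : ℝ) :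
    let v : Finset (Fin (m - 1) ⊕ Fin k) → ℝ :=
      fun S => if (∀ a : Fin (m - 1), Sum.inl a ∈ S) ∧ (∃ b : Fin k, Sum.inr b ∈ S)
               then p else 0
    ∀ l : Fin (m - 1),
      shapley Finset.univ v (Sum.inl l) =
        p * ∑ i ∈ Finset.range k,
          ((i.factorial * (m - 1).factorial : ℕ) : ℝ) / ((m + i).factorial : ℝ) := by
  intro v l
  obtain ⟨q, rfl⟩ : ∃ q, m = q + 2 := ⟨m - 2, by have := l.pos; omega⟩
  have hcard : Fintype.card (Fin (q + 2 - 1)) = q + 1 := by simp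
  -- the two `if`s differ in their `Decidable` instances (`decidableForallFin` on `Fin`)
  have hv : v = duplicateTaskGame p := by
    unfold v duplicateTaskGame
    congr!
  rw [hv, shapley_inl_duplicateTaskGame hcard p l,
    Fintype.card_fin, ← sum_range_factorial_mul_factorial_div_factorial]
  simp

/-- Game with `m-1` singleton task players (the `Sum.inl` players) and `k` identical players
`j^1,…,j^k` (the `Sum.inr` players) for the remaining task: a coalition is worth `p` iff it
contains all singleton players and at least one `j^i`.  Each singleton player `l` has Shapley
value `p · Σ_{i=1}^{k} (i-1)!(m-1)!/(m+i-1)!` (written below with the index shifted). -/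
theorem shapley_singleton_player_with_k_duplicates (m k : ℕ) (hm : 2 ≤ m) (hk : 1 ≤ k)
    (p : ℝ) :
    let v : Finset (Fin (m - 1) ⊕ Fin k) → ℝ :=
      fun S => if (∀ a : Fin (m - 1), Sum.inl a ∈ S) ∧ (∃ b : Fin k, Sum.inr b ∈ S)
               then p else 0
    ∀ l : Fin (m - 1),
      shapley Finset.univ v (Sum.inl l) =
        p * ∑ i ∈ Finset.range k,
          ((i.factorial * (m - 1).factorial : ℕ) : ℝ) / ((m + i).factorial : ℝ) :=
  shapley_singleton_player_with_k_duplicates_general m k p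
end
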